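/- Fix linear forms u_i(x,y) = a_i x + b_i y for i = 1,…,k with a_i b_j − a_j b_i ≠ 0 for i ≠ j, and let v_i = b_i ∂_x − a_i ∂_y be the associated (pairwise commuting) vector fields. For a germ of holomorphic function g of one variable and a submersion u, g(u) can be written as Σ_{i=1}^k g_i(u_i) for suitable germs g_i if and only if v₁v₂⋯v_k( g(u) ) = 0. -/

import Mathlib

open Filter

/-- Partial derivative with respect to the first variable. -/
noncomputable def pdx (F : ℂ × ℂ → ℂ) (p : ℂ × ℂ) : ℂ :=
  deriv (fun z => F (z, p.2)) p.1

/-- Partial derivative with respect to the second variable. -/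
noncomputable def pdy (F : ℂ × ℂ → ℂ) (p : ℂ × ℂ) : ℂ :=
  deriv (fun z => F (p.1, z)) p.2

/-!
A field `v = b ∂x - a ∂y` kills every function of `a x + b y` and sends `h (α x + β y)` to
`(b α - a β) h' (α x + β y)`; hence `v₁ ⋯ v_k` kills each `g_i (u_i)`. Conversely, if
`v₁ (v₂ ⋯ v_k G) = 0`, then `v₂ ⋯ v_k G` is constant along the lines of `v₁`, i.e. equal to
`h (u₁)`. Choosing `H` with `H^{(k-1)} = h / ∏_{i ≥ 2} (b_i a₁ - a_i b₁)` (the product is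
nonzero by the pairwise condition), `v₂ ⋯ v_k` kills `G - H (u₁)`, and induction on `k` applies.
-/

open Topology

noncomputable def vDeriv (a b : ℂ) (F : ℂ × ℂ → ℂ) : ℂ × ℂ → ℂ :=
  fun q => b * pdx F q - a * pdy F q

noncomputable def vDerivs {ι : Type*} (a b : ι → ℂ) (L : List ι) (F : ℂ × ℂ → ℂ) :
    ℂ × ℂ → ℂ :=
  L.foldr (fun i F => vDeriv (a i) (b i) F) F

section OneVariable

lemma deriv_comp_mul_add {𝕜 : Type*} [NontriviallyNormedField 𝕜] (h : 𝕜 → 𝕜) (α c x : 𝕜) :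
    deriv (fun z => h (α * z + c)) x = α * deriv h (α * x + c) := by
  simpa [deriv_comp_add_const] using deriv_comp_mul_left α (fun w => h (w + c)) x

lemma deriv_comp_add_mul {𝕜 : Type*} [NontriviallyNormedField 𝕜] (h : 𝕜 → 𝕜) (α c x : 𝕜) :
    deriv (fun z => h (c + α * z)) x = α * deriv h (c + α * x) := by
  simpa only [add_comm c] using deriv_comp_mul_add h α c x

lemma AnalyticAt.exists_primitive {h : ℂ → ℂ} {c : ℂ} (hh : AnalyticAt ℂ h c) :
    ∃ H : ℂ → ℂ, AnalyticAt ℂ H c ∧ deriv H =ᶠ[𝓝 c] h := by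
  obtain ⟨r, hr, hball⟩ := Metric.eventually_nhds_iff_ball.1 hh.eventually_analyticAt
  obtain ⟨H, hH⟩ := DifferentiableOn.isExactOn_ball fun z hz =>
    (hball z hz).differentiableAt.differentiableWithinAt
  have hball_nhds := Metric.ball_mem_nhds c hr
  refine ⟨H, ?_, ?_⟩
  · exact DifferentiableOn.analyticAt
      (fun z hz => (hH z hz).differentiableAt.differentiableWithinAt) hball_nhds
  · filter_upwards [hball_nhds] with z hz using (hH z hz).deriv

lemma AnalyticAt.exists_iterated_primitive (n : ℕ) {h : ℂ → ℂ} {c : ℂ}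
    (hh : AnalyticAt ℂ h c) : ∃ H : ℂ → ℂ, AnalyticAt ℂ H c ∧ deriv^[n] H =ᶠ[𝓝 c] h := by
  induction n generalizing h with
  | zero => exact ⟨h, hh, .rfl⟩
  | succ n ih =>
    obtain ⟨H₁, hH₁, hH₁h⟩ := hh.exists_primitive
    obtain ⟨H, hH, hHH₁⟩ := ih hH₁
    refine ⟨H, hH, ?_⟩
    rw [Function.iterate_succ_apply']
    exact hHH₁.deriv.trans hH₁h

end OneVariable

section PartialDerivatives

variable {F F' : ℂ × ℂ → ℂ} {q z : ℂ × ℂ}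

lemma pdx_eq_fderiv (hF : DifferentiableAt ℂ F q) : pdx F q = fderiv ℂ F q (1, 0) := by
  have hline : HasDerivAt (fun s : ℂ => (s, q.2)) (1, 0) q.1 :=
    (hasDerivAt_id q.1).prodMk (hasDerivAt_const q.1 q.2)
  exact (hF.hasFDerivAt.comp_hasDerivAt q.1 hline).deriv

lemma pdy_eq_fderiv (hF : DifferentiableAt ℂ F q) : pdy F q = fderiv ℂ F q (0, 1) := by
  have hline : HasDerivAt (fun s : ℂ => (q.1, s)) (0, 1) q.2 :=
    (hasDerivAt_const q.2 q.1).prodMk (hasDerivAt_id q.2)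
  exact (hF.hasFDerivAt.comp_hasDerivAt q.2 hline).deriv

lemma vDeriv_eq_fderiv (a b : ℂ) (hF : DifferentiableAt ℂ F q) :
    vDeriv a b F q = fderiv ℂ F q (b, -a) := by
  have hv : ((b, -a) : ℂ × ℂ) = b • (1, 0) - a • (0, 1) := by simp
  rw [vDeriv, pdx_eq_fderiv hF, pdy_eq_fderiv hF, hv, map_sub, map_smul, map_smul,
    smul_eq_mul, smul_eq_mul]

lemma vDeriv_congr (a b : ℂ) (h : F =ᶠ[𝓝 z] F') : vDeriv a b F =ᶠ[𝓝 z] vDeriv a b F' := by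
  filter_upwards [h.eventually_nhds] with q (hq : F =ᶠ[𝓝 q] F')
  have hx : pdx F q = pdx F' q :=
    (hq.comp_tendsto ((Continuous.prodMk_left q.2).tendsto q.1)).deriv_eq
  have hy : pdy F q = pdy F' q :=
    (hq.comp_tendsto ((Continuous.prodMk_right q.1).tendsto q.2)).deriv_eq
  simp only [vDeriv, hx, hy]

lemma vDeriv_const_mul (a b c : ℂ) (F : ℂ × ℂ → ℂ) :
    vDeriv a b (fun q => c * F q) = fun q => c * vDeriv a b F q := by
  funext q
  simp only [vDeriv, pdx, pdy, deriv_const_mul_field']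
  ring

lemma vDeriv_comp_linear (a b α β : ℂ) (h : ℂ → ℂ) :
    vDeriv a b (fun p => h (α * p.1 + β * p.2)) =
      fun q => (b * α - a * β) * deriv h (α * q.1 + β * q.2) := by
  funext q
  simp only [vDeriv, pdx, pdy, deriv_comp_mul_add, deriv_comp_add_mul]
  ring

lemma AnalyticAt.vDeriv (a b : ℂ) (hF : AnalyticAt ℂ F z) : AnalyticAt ℂ (vDeriv a b F) z := by
  have hfderiv : AnalyticAt ℂ (fun q => fderiv ℂ F q (b, -a)) z :=
    (ContinuousLinearMap.apply ℂ ℂ ((b, -a) : ℂ × ℂ)).analyticAt _ |>.comp hF.fderiv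
  refine hfderiv.congr ?_
  filter_upwards [hF.eventually_analyticAt] with q hq
  exact (vDeriv_eq_fderiv a b hq.differentiableAt).symm

lemma vDeriv_sub (a b : ℂ) (hF : AnalyticAt ℂ F z) (hF' : AnalyticAt ℂ F' z) :
    vDeriv a b (fun q => F q - F' q) =ᶠ[𝓝 z] fun q => vDeriv a b F q - vDeriv a b F' q := by
  filter_upwards [hF.eventually_analyticAt, hF'.eventually_analyticAt] with q hq hq'
  rw [vDeriv_eq_fderiv a b (hq.differentiableAt.fun_sub hq'.differentiableAt),
    fderiv_fun_sub hq.differentiableAt hq'.differentiableAt,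
    vDeriv_eq_fderiv a b hq.differentiableAt, vDeriv_eq_fderiv a b hq'.differentiableAt]
  rfl

lemma vDeriv_sum {ι : Type*} (a b : ℂ) {s : Finset ι} {F : ι → ℂ × ℂ → ℂ}
    (hF : ∀ i ∈ s, AnalyticAt ℂ (F i) z) :
    vDeriv a b (fun q => ∑ i ∈ s, F i q) =ᶠ[𝓝 z] fun q => ∑ i ∈ s, vDeriv a b (F i) q := by
  filter_upwards [(eventually_all_finset s).2 fun i hi => (hF i hi).eventually_analyticAt]
    with q hq
  have hd : ∀ i ∈ s, DifferentiableAt ℂ (F i) q := fun i hi => (hq i hi).differentiableAt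
  rw [vDeriv_eq_fderiv a b (DifferentiableAt.fun_sum hd), fderiv_fun_sum hd]
  simp only [FunLike.coe_sum, Finset.sum_apply]
  exact Finset.sum_congr rfl fun i hi => (vDeriv_eq_fderiv a b (hd i hi)).symm

end PartialDerivatives

section Iterated

variable {ι : Type*} (a b : ι → ℂ) {F F' : ℂ × ℂ → ℂ} {z : ℂ × ℂ}

@[simp] lemma vDerivs_nil (F : ℂ × ℂ → ℂ) : vDerivs a b [] F = F := rfl

@[simp] lemma vDerivs_cons (i : ι) (L : List ι) (F : ℂ × ℂ → ℂ) :
    vDerivs a b (i :: L) F = vDeriv (a i) (b i) (vDerivs a b L F) := rfl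

lemma AnalyticAt.vDerivs (hF : AnalyticAt ℂ F z) (L : List ι) :
    AnalyticAt ℂ (vDerivs a b L F) z := by
  induction L with
  | nil => exact hF
  | cons i L ih => exact ih.vDeriv (a i) (b i)

lemma vDerivs_congr (h : F =ᶠ[𝓝 z] F') (L : List ι) :
    vDerivs a b L F =ᶠ[𝓝 z] vDerivs a b L F' := by
  induction L with
  | nil => exact h
  | cons i L ih => exact vDeriv_congr (a i) (b i) ih

lemma vDerivs_sub (hF : AnalyticAt ℂ F z) (hF' : AnalyticAt ℂ F' z) (L : List ι) :
    vDerivs a b L (fun q => F q - F' q) =ᶠ[𝓝 z]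
      fun q => vDerivs a b L F q - vDerivs a b L F' q := by
  induction L with
  | nil => rfl
  | cons i L ih =>
    exact (vDeriv_congr (a i) (b i) ih).trans
      (vDeriv_sub (a i) (b i) (hF.vDerivs a b L) (hF'.vDerivs a b L))

lemma vDerivs_sum {κ : Type*} {s : Finset κ} {F : κ → ℂ × ℂ → ℂ}
    (hF : ∀ k ∈ s, AnalyticAt ℂ (F k) z) (L : List ι) :
    vDerivs a b L (fun q => ∑ k ∈ s, F k q) =ᶠ[𝓝 z]
      fun q => ∑ k ∈ s, vDerivs a b L (F k) q := by
  induction L with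
  | nil => rfl
  | cons i L ih =>
    exact (vDeriv_congr (a i) (b i) ih).trans
      (vDeriv_sum (a i) (b i) fun k hk => (hF k hk).vDerivs a b L)

lemma vDerivs_comp_linear (α β : ℂ) (h : ℂ → ℂ) (L : List ι) :
    vDerivs a b L (fun p => h (α * p.1 + β * p.2)) =
      fun q => (L.map fun i => b i * α - a i * β).prod *
        deriv^[L.length] h (α * q.1 + β * q.2) := by
  induction L with
  | nil => simp
  | cons i L ih =>
    rw [vDerivs_cons, ih, vDeriv_const_mul, vDeriv_comp_linear]
    funext q
    rw [List.map_cons, List.prod_cons, List.length_cons, Function.iterate_succ_apply']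
    ring

lemma vDerivs_comp_linear_of_mem (h : ℂ → ℂ) {L : List ι} {i : ι} (hi : i ∈ L) :
    vDerivs a b L (fun p => h (a i * p.1 + b i * p.2)) = 0 := by
  rw [vDerivs_comp_linear]
  have hzero : (L.map fun j => b j * a i - a j * b i).prod = 0 :=
    List.prod_eq_zero (List.mem_map.2 ⟨i, hi, by ring⟩)
  funext q
  simp [hzero]

end Iterated

lemma eventually_eq_of_hasDerivAt_snd_eq_zero {X E : Type*} [TopologicalSpace X]
    [NormedAddCommGroup E] [NormedSpace ℂ E] {G : X × ℂ → E} {w : X × ℂ}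
    (h : ∀ᶠ q in 𝓝 w, HasDerivAt (fun s => G (q.1, s)) 0 q.2) :
    ∀ᶠ q in 𝓝 w, G q = G (q.1, w.2) := by
  rw [nhds_prod_eq] at h ⊢
  obtain ⟨U, hU, V, hV, hUV⟩ := mem_prod_iff.1 h
  obtain ⟨r, hr, hrV⟩ := Metric.mem_nhds_iff.1 hV
  filter_upwards [prod_mem_prod hU (Metric.ball_mem_nhds w.2 hr)] with q ⟨hq₁, hq₂⟩
  have hslice : ∀ s ∈ Metric.ball w.2 r, HasDerivAt (fun s => G (q.1, s)) 0 s :=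
    fun s hs => hUV (show (q.1, s) ∈ U ×ˢ V from ⟨hq₁, hrV hs⟩)
  exact Metric.isOpen_ball.is_const_of_deriv_eq_zero (convex_ball _ _).isPreconnected
    (fun s hs => (hslice s hs).differentiableAt.differentiableWithinAt)
    (fun s hs => (hslice s hs).deriv) hq₂ (Metric.mem_ball_self hr)

lemma exists_eventuallyEq_comp_linear_of_vDeriv_eq_zero {a b : ℂ} (hab : a ≠ 0 ∨ b ≠ 0)
    {F : ℂ × ℂ → ℂ} {z : ℂ × ℂ} (hF : AnalyticAt ℂ F z) (hv : vDeriv a b F =ᶠ[𝓝 z] 0) :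
    ∃ h : ℂ → ℂ, AnalyticAt ℂ h (a * z.1 + b * z.2) ∧
      F =ᶠ[𝓝 z] fun p => h (a * p.1 + b * p.2) := by
  obtain ⟨c, d, hcd⟩ : ∃ c d : ℂ, a * c + b * d = 1 := by
    rcases hab with ha | hb
    · exact ⟨a⁻¹, 0, by simp [ha]⟩
    · exact ⟨0, b⁻¹, by simp [hb]⟩
  -- In the coordinates `(t, s) ↦ t • (c, d) + s • (b, -a)` the field `v` becomes `∂ₛ`;
  -- `Ψ` inverts them and its first coordinate is the linear form `a x + b y`.
  set Φ : ℂ × ℂ → ℂ × ℂ := fun q => (q.1 * c + q.2 * b, q.1 * d - q.2 * a)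
  set Ψ : ℂ × ℂ → ℂ × ℂ := fun p => (a * p.1 + b * p.2, d * p.1 - c * p.2)
  have hΦΨ : ∀ p, Φ (Ψ p) = p := fun p => by
    ext
    · linear_combination p.1 * hcd
    · linear_combination p.2 * hcd
  have hslice : ∀ᶠ q in 𝓝 (Ψ z), HasDerivAt (fun s => F (Φ (q.1, s))) 0 q.2 := by
    have hΦ : Tendsto Φ (𝓝 (Ψ z)) (𝓝 z) := by
      simpa only [hΦΨ] using (by fun_prop : Continuous Φ).tendsto (Ψ z)
    filter_upwards [hΦ.eventually (hF.eventually_analyticAt.and hv)] with q ⟨hFq, hvq⟩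
    have hline : HasDerivAt (fun s => Φ (q.1, s)) (b, -a) q.2 := by
      simpa using ((hasDerivAt_mul_const b).const_add (q.1 * c)).prodMk
        ((hasDerivAt_mul_const a).const_sub (q.1 * d))
    have := hFq.differentiableAt.hasFDerivAt.comp_hasDerivAt q.2 hline
    rwa [← vDeriv_eq_fderiv a b hFq.differentiableAt, hvq] at this
  refine ⟨fun t => F (Φ (t, (Ψ z).2)), ?_, ?_⟩
  · exact hF.comp_of_eq ((by fun_prop : Differentiable ℂ fun t => Φ (t, (Ψ z).2)).analyticAt _)
      (hΦΨ z)
  · filter_upwards [((by fun_prop : Continuous Ψ).tendsto z).eventually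
      (eventually_eq_of_hasDerivAt_snd_eq_zero (G := fun q => F (Φ q)) hslice)] with p hp
    simpa only [hΦΨ] using hp

lemma AnalyticAt.comp_linear {h : ℂ → ℂ} {α β : ℂ} {z : ℂ × ℂ}
    (hh : AnalyticAt ℂ h (α * z.1 + β * z.2)) :
    AnalyticAt ℂ (fun p : ℂ × ℂ => h (α * p.1 + β * p.2)) z :=
  hh.comp_of_eq ((analyticAt_const.mul analyticAt_fst).add (analyticAt_const.mul analyticAt_snd))
    rfl

section Decomposition

variable {ι : Type*} (a b : ι → ℂ)

lemma vDerivs_eq_zero_of_eventuallyEq_sum_comp_linear {L : List ι} {s : Finset ι}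
    (hs : ∀ i ∈ s, i ∈ L) {gs : ι → ℂ → ℂ} {z : ℂ × ℂ}
    (hgs : ∀ i ∈ s, AnalyticAt ℂ (gs i) (a i * z.1 + b i * z.2)) {G : ℂ × ℂ → ℂ}
    (hG : G =ᶠ[𝓝 z] fun p => ∑ i ∈ s, gs i (a i * p.1 + b i * p.2)) :
    vDerivs a b L G =ᶠ[𝓝 z] 0 := by
  refine (vDerivs_congr a b hG L).trans <|
    (vDerivs_sum a b (fun i hi => (hgs i hi).comp_linear) L).trans <| .of_eq ?_
  funext q
  exact Finset.sum_eq_zero fun i hi => congrFun (vDerivs_comp_linear_of_mem a b _ (hs i hi)) q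

lemma exists_vDerivs_sub_comp_linear_eq_zero {j : ι} {L : List ι}
    (hjL : ∀ i ∈ L, a j * b i - a i * b j ≠ 0) (hj : a j ≠ 0 ∨ b j ≠ 0)
    {G : ℂ × ℂ → ℂ} {z : ℂ × ℂ} (hG : AnalyticAt ℂ G z)
    (hv : vDerivs a b (j :: L) G =ᶠ[𝓝 z] 0) :
    ∃ H : ℂ → ℂ, AnalyticAt ℂ H (a j * z.1 + b j * z.2) ∧
      vDerivs a b L (fun p => G p - H (a j * p.1 + b j * p.2)) =ᶠ[𝓝 z] 0 := by
  obtain ⟨h, hh, hLG⟩ :=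
    exists_eventuallyEq_comp_linear_of_vDeriv_eq_zero hj (hG.vDerivs a b L) hv
  set c := (L.map fun i => b i * a j - a i * b j).prod
  have hc : c ≠ 0 := List.prod_ne_zero fun hmem => by
    obtain ⟨i, hi, hci⟩ := List.mem_map.1 hmem
    exact hjL i hi (by linear_combination hci)
  obtain ⟨H, hH, hHh⟩ := (analyticAt_const.mul hh :
    AnalyticAt ℂ (fun t => c⁻¹ * h t) _).exists_iterated_primitive L.length
  refine ⟨H, hH, (vDerivs_sub a b hG hH.comp_linear L).trans ?_⟩
  rw [vDerivs_comp_linear]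
  have hℓ : Tendsto (fun p : ℂ × ℂ => a j * p.1 + b j * p.2) (𝓝 z)
      (𝓝 (a j * z.1 + b j * z.2)) := (by fun_prop : Continuous _).tendsto z
  filter_upwards [hLG, hℓ.eventually hHh] with p hLGp hHp
  simp [hLGp, hHp, c, hc]

lemma exists_eventuallyEq_sum_comp_linear_of_vDerivs_eq_zero [DecidableEq ι] {L : List ι}
    (hL : L.Pairwise fun i j => a i * b j - a j * b i ≠ 0) (hab : ∀ i ∈ L, a i ≠ 0 ∨ b i ≠ 0)
    {G : ℂ × ℂ → ℂ} {z : ℂ × ℂ} (hG : AnalyticAt ℂ G z) (hv : vDerivs a b L G =ᶠ[𝓝 z] 0) :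
    ∃ gs : ι → ℂ → ℂ, (∀ i ∈ L, AnalyticAt ℂ (gs i) (a i * z.1 + b i * z.2)) ∧
      G =ᶠ[𝓝 z] fun p => ∑ i ∈ L.toFinset, gs i (a i * p.1 + b i * p.2) := by
  induction L generalizing G with
  | nil => exact ⟨0, by simp, hv.trans (.of_eq (funext fun p => by simp))⟩
  | cons j L ih =>
    obtain ⟨hjL, hL⟩ := List.pairwise_cons.1 hL
    have hne : ∀ i ∈ L, i ≠ j := fun i hi hij => hjL i hi (by rw [hij]; ring)
    obtain ⟨H, hH, hrest⟩ :=
      exists_vDerivs_sub_comp_linear_eq_zero a b hjL (hab j List.mem_cons_self) hG hv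
    obtain ⟨gs, hgs, hGgs⟩ := ih hL (fun i hi => hab i (List.mem_cons_of_mem j hi))
      (hG.fun_sub hH.comp_linear) hrest
    refine ⟨Function.update gs j H, ?_, ?_⟩
    · intro i hi
      rcases List.mem_cons.1 hi with rfl | hi
      · simpa using hH
      · simpa [Function.update_of_ne (hne i hi)] using hgs i hi
    · have hj : j ∉ L.toFinset := fun hj => hne j (List.mem_toFinset.1 hj) rfl
      rw [List.toFinset_cons, ← Finset.cons_eq_insert j _ hj]
      filter_upwards [hGgs] with p hp
      rw [Finset.sum_cons, Function.update_self, Finset.sum_congr rfl fun i hi =>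
        by rw [Function.update_of_ne (hne i (List.mem_toFinset.1 hi))]]
      linear_combination hp

end Decomposition

/-- Fix linear forms `u i (x,y) = a i · x + b i · y`, `i = 1,…,k`, with
`a i · b j - a j · b i ≠ 0` for `i ≠ j`, and let `v i = b i · ∂x - a i · ∂y` be the
associated pairwise commuting (Hamiltonian) vector fields.  Let `u` be a germ of
holomorphic submersion at `0 ∈ ℂ²` with `u(0) = 0` and `v i (u) ≠ 0` for all `i`, and let
`g` be a germ of holomorphic function of one variable.  Then `g ∘ u` can be written as
`∑ i, g_i ∘ u_i` near the origin, for suitable analytic germs `g_i`, if and only if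
`v₁ v₂ ⋯ v_k ( g ∘ u ) = 0` identically near the origin. -/
theorem stmt_17 (k : ℕ) (a b : Fin k → ℂ)
    (hpair : ∀ i j, i ≠ j → a i * b j - a j * b i ≠ 0)
    (u : ℂ × ℂ → ℂ) (hu : AnalyticAt ℂ u 0) (hu0 : u 0 = 0)
    (husub : ∀ i, b i * pdx u 0 - a i * pdy u 0 ≠ 0)
    (g : ℂ → ℂ) (hg : AnalyticAt ℂ g 0) :
    (∃ gs : Fin k → (ℂ → ℂ), (∀ i, AnalyticAt ℂ (gs i) 0) ∧
        ∀ᶠ p in nhds (0 : ℂ × ℂ), g (u p) = ∑ i, gs i (a i * p.1 + b i * p.2)) ↔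
      (∀ᶠ p in nhds (0 : ℂ × ℂ),
        (List.finRange k).foldr
          (fun i F => fun q => b i * pdx F q - a i * pdy F q)
          (fun q => g (u q)) p = 0) := by
  change (∃ gs : Fin k → ℂ → ℂ, _ ∧ (fun p => g (u p)) =ᶠ[𝓝 0] _) ↔
    vDerivs a b (List.finRange k) (fun q => g (u q)) =ᶠ[𝓝 0] 0
  constructor
  · rintro ⟨gs, hgs, hG⟩
    exact vDerivs_eq_zero_of_eventuallyEq_sum_comp_linear a b (fun i _ => List.mem_finRange i)
      (fun i _ => by simpa using hgs i) hG
  · intro hv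
    have hL : (List.finRange k).Pairwise fun i j => a i * b j - a j * b i ≠ 0 :=
      (List.nodup_finRange k).pairwise_of_forall_ne fun i _ j _ => hpair i j
    have hab : ∀ i ∈ List.finRange k, a i ≠ 0 ∨ b i ≠ 0 := fun i _ => by
      by_contra! hi
      exact husub i (by simp [hi.1, hi.2])
    obtain ⟨gs, hgs, hG⟩ := exists_eventuallyEq_sum_comp_linear_of_vDerivs_eq_zero a b hL hab
      (hg.comp_of_eq hu hu0) hv
    rw [List.toFinset_finRange] at hG
    exact ⟨gs, fun i => by simpa using hgs i (List.mem_finRange i), hG⟩
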